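/- Let {γ_n}_{n≥0} be a CPD sequence with limsup_{n→∞} |γ_n|^{1/n} < ∞ and representing triplet (b, c, ν). The following are equivalent: (i) there exists α ≥ 0 such that |γ_n| ≤ α·n² for all n ≥ 1; (ii) limsup_{n→∞} |γ_n|^{1/n} ≤ 1; (iii) supp ν ⊆ [−1, 1]. Moreover, (iii) implies (i) with α = |γ_0| + |b| + c + ν(ℝ). -/

import Mathlib

open MeasureTheory Filter Topology
open scoped ComplexOrder

noncomputable section

/-- A real sequence `γ` is *conditionally positive definite* (CPD) if
`∑_{i,j=0}^k γ_{i+j} λ_i conj(λ_j) ≥ 0` for all finite sequences `λ_0, …, λ_k` of complex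
numbers with `∑_{i=0}^k λ_i = 0`. -/
def IsCPDSeq (γ : ℕ → ℝ) : Prop :=
  ∀ (k : ℕ) (l : ℕ → ℂ), ∑ i ∈ Finset.range (k + 1), l i = 0 →
    0 ≤ ∑ i ∈ Finset.range (k + 1), ∑ j ∈ Finset.range (k + 1),
        (γ (i + j) : ℂ) * l i * (starRingEnd ℂ) (l j)

/-- A real sequence `γ` is *positive definite* (PD) if
`∑_{i,j=0}^k γ_{i+j} λ_i conj(λ_j) ≥ 0` for all finite sequences `λ_0, …, λ_k ∈ ℂ`. -/
def IsPDSeq (γ : ℕ → ℝ) : Prop :=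
  ∀ (k : ℕ) (l : ℕ → ℂ),
    0 ≤ ∑ i ∈ Finset.range (k + 1), ∑ j ∈ Finset.range (k + 1),
        (γ (i + j) : ℂ) * l i * (starRingEnd ℂ) (l j)

/-- The polynomial `Q_n`: `Q_n(x) = 0` for `n = 0, 1` and
`Q_n(x) = ∑_{j=0}^{n-2} (n - j - 1) x^j` for `n ≥ 2`. -/
def Qpoly (n : ℕ) (x : ℝ) : ℝ :=
  ∑ j ∈ Finset.range (n - 1), ((n : ℝ) - (j : ℝ) - 1) * x ^ j

/-- `(b, c, ν)` is a representing triplet of the sequence `γ`: `b ∈ ℝ`, `c ≥ 0`, `ν` a finite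
compactly supported Borel measure on `ℝ` with `ν({1}) = 0`, and
`γ_n = γ_0 + b n + c n² + ∫ Q_n dν` for all `n`. -/
def IsRepTriplet (γ : ℕ → ℝ) (b c : ℝ) (ν : Measure ℝ) : Prop :=
  0 ≤ c ∧ IsFiniteMeasure ν ∧ (∃ K : Set ℝ, IsCompact K ∧ ν Kᶜ = 0) ∧
    ν ({1} : Set ℝ) = 0 ∧
    ∀ n : ℕ, γ n = γ 0 + b * n + c * (n : ℝ) ^ 2 + ∫ x, Qpoly n x ∂ν

/-- The sequence `n ↦ |γ_n|^{1/n}`. -/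
def rootSeq (γ : ℕ → ℝ) : ℕ → ℝ := fun n => |γ n| ^ ((1 : ℝ) / n)

/-- `limsup_{n → ∞} |γ_n|^{1/n} < ∞`, i.e. the sequence `|γ_n|^{1/n}` is (eventually)
bounded above. -/
def FiniteExpGrowth (γ : ℕ → ℝ) : Prop :=
  IsBoundedUnder (· ≤ ·) atTop (rootSeq γ)

/-- `limsup_{n → ∞} |γ_n|^{1/n}` (as a real number). -/
def limsupRoot (γ : ℕ → ℝ) : ℝ := limsup (rootSeq γ) atTop

/-- The closed support of a Borel measure on `ℝ`: the set of points all of whose open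
neighbourhoods have nonzero measure. -/
def measSupport (ν : Measure ℝ) : Set ℝ :=
  {x : ℝ | ∀ U : Set ℝ, IsOpen U → x ∈ U → ν U ≠ 0}

/-- The difference transformation `Δ`, `(Δγ)_n = γ_{n+1} - γ_n`. -/
def deltaSeq (γ : ℕ → ℝ) : ℕ → ℝ := fun n => γ (n + 1) - γ n

/-! The identity `(x - 1)² Q_n(x) = xⁿ - n x + n - 1` controls `Q_n`. On `[-1, 1]` it gives
`|Q_n| ≤ n²`, so if `ν` lives there then `γ_n = O(n²)`, and polynomial growth forces root growth
rate at most `1`. Conversely, for even `n` Bernoulli's inequality makes `Q_n ≥ 0`, and a support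
point `x₀` with `|x₀| > 1` gives `Q_n ≥ c rⁿ - O(n)` with `r > 1` on a ball of positive
`ν`-measure; so `γ_n` grows exponentially along the even `n`, pushing `limsup |γ_n|^{1/n}`
above `1`. -/

open Asymptotics

lemma measSupport_eq_support (ν : Measure ℝ) : measSupport ν = ν.support := by
  ext x
  simp only [measSupport, Measure.support_eq_forall_isOpen, Set.mem_ofPred_eq, pos_iff_ne_zero]
  exact forall_congr' fun U => imp.swap

lemma continuous_Qpoly (n : ℕ) : Continuous (Qpoly n) := by
  unfold Qpoly
  fun_prop

lemma Qpoly_succ_succ (n : ℕ) (x : ℝ) :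
    Qpoly (n + 2) x = Qpoly (n + 1) x + ∑ j ∈ Finset.range (n + 1), x ^ j := by
  rw [Qpoly, Qpoly, show n + 2 - 1 = n + 1 from rfl, show n + 1 - 1 = n from rfl,
    Finset.sum_range_succ, Finset.sum_range_succ (fun j => x ^ j), ← add_assoc, ← Finset.sum_add_distrib]
  push_cast
  congr 1
  · exact Finset.sum_congr rfl fun _ _ => by ring
  · ring

lemma sq_sub_one_mul_Qpoly (n : ℕ) (x : ℝ) :
    (x - 1) ^ 2 * Qpoly n x = x ^ n - n * x + n - 1 := by
  induction n using Nat.twoStepInduction with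
  | zero => simp [Qpoly]
  | one => simp [Qpoly]
  | more k _ ih =>
    rw [Qpoly_succ_succ, mul_add, ih, sq, mul_assoc, mul_comm (x - 1) (∑ j ∈ _, _), geom_sum_mul]
    push_cast
    ring

lemma Even.pow_sub_mul_add_sub_one_nonneg {n : ℕ} (hn : Even n) (x : ℝ) :
    0 ≤ x ^ n - n * x + n - 1 := by
  have bernoulli := one_add_mul_le_pow (a := |x| - 1) (by linarith [abs_nonneg x]) n
  rw [add_sub_cancel, hn.pow_abs] at bernoulli
  nlinarith [le_abs_self x, (n.cast_nonneg : (0 : ℝ) ≤ n)]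

lemma Qpoly_nonneg {n : ℕ} (hn : Even n) (x : ℝ) : 0 ≤ Qpoly n x := by
  rcases eq_or_ne x 1 with rfl | hx
  · refine Finset.sum_nonneg fun j hj => ?_
    have : (j : ℝ) + 2 ≤ n := by exact_mod_cast (by grind : j + 2 ≤ n)
    nlinarith [one_pow (M := ℝ) j]
  · have hpos : 0 < (x - 1) ^ 2 := by positivity [sub_ne_zero.mpr hx]
    nlinarith [sq_sub_one_mul_Qpoly n x, hn.pow_sub_mul_add_sub_one_nonneg x]

lemma sub_mul_le_sq_mul_Qpoly {n : ℕ} (hn : Even n) (hn₁ : 1 ≤ n) {r R x : ℝ} (hr : 0 ≤ r)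
    (hrx : r ≤ |x|) (hxR : |x| ≤ R) : r ^ n - n * R ≤ (R + 1) ^ 2 * Qpoly n x := by
  have hpow : r ^ n ≤ x ^ n := hn.pow_abs x ▸ pow_le_pow_left₀ hr hrx n
  have hlin : (n : ℝ) * x ≤ n * R :=
    mul_le_mul_of_nonneg_left ((le_abs_self x).trans hxR) n.cast_nonneg
  have hn₁' : (1 : ℝ) ≤ n := by exact_mod_cast hn₁
  have hsq : (x - 1) ^ 2 ≤ (R + 1) ^ 2 :=
    sq_le_sq' (by linarith [neg_abs_le x]) (by linarith [le_abs_self x])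
  calc r ^ n - n * R ≤ x ^ n - n * x + n - 1 := by linarith
    _ = (x - 1) ^ 2 * Qpoly n x := (sq_sub_one_mul_Qpoly n x).symm
    _ ≤ (R + 1) ^ 2 * Qpoly n x := mul_le_mul_of_nonneg_right hsq (Qpoly_nonneg hn x)

lemma abs_Qpoly_le {x : ℝ} (hx : |x| ≤ 1) (n : ℕ) : |Qpoly n x| ≤ n ^ 2 := by
  calc |Qpoly n x| ≤ ∑ j ∈ Finset.range (n - 1), |((n : ℝ) - j - 1) * x ^ j| :=
        Finset.abs_sum_le_sum_abs _ _
    _ ≤ ∑ _j ∈ Finset.range (n - 1), (n : ℝ) := by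
        refine Finset.sum_le_sum fun j hj => ?_
        have : (j : ℝ) + 2 ≤ n := by exact_mod_cast (by grind : j + 2 ≤ n)
        rw [abs_mul, abs_pow, abs_of_nonneg (by linarith : (0 : ℝ) ≤ n - j - 1)]
        nlinarith [pow_le_one₀ (abs_nonneg x) hx (n := j), pow_nonneg (abs_nonneg x) j,
          (j.cast_nonneg : (0 : ℝ) ≤ j)]
    _ ≤ (n : ℝ) ^ 2 := by
        rw [Finset.sum_const, Finset.card_range, nsmul_eq_mul, sq]
        exact mul_le_mul_of_nonneg_right (by exact_mod_cast n.sub_le 1) n.cast_nonneg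

section Measure

variable {ν : Measure ℝ} [IsFiniteMeasure ν]

lemma abs_integral_Qpoly_le (hsupp : ν.support ⊆ Set.Icc (-1) 1) (n : ℕ) :
    |∫ x, Qpoly n x ∂ν| ≤ n ^ 2 * ν.real Set.univ := by
  have hsupp_ae : ∀ᵐ x ∂ν, x ∈ ν.support := Measure.support_mem_ae
  have hbound : ∀ᵐ x ∂ν, ‖Qpoly n x‖ ≤ (n : ℝ) ^ 2 :=
    hsupp_ae.mono fun x hx => abs_Qpoly_le (abs_le.mpr (hsupp hx)) n
  simpa using norm_integral_le_of_norm_le_const hbound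

lemma integrable_Qpoly {K : Set ℝ} (hK : IsCompact K) (hKc : ν Kᶜ = 0) (n : ℕ) :
    Integrable (Qpoly n) ν := by
  rw [← Measure.restrict_eq_self_of_ae_mem hKc]
  exact (continuous_Qpoly n).continuousOn.integrableOn_compact hK

lemma exists_mul_pow_sub_le_integral_Qpoly (hint : ∀ n, Integrable (Qpoly n) ν) {x₀ : ℝ}
    (hx₀ : x₀ ∈ ν.support) (h₁ : 1 < |x₀|) :
    ∃ C > 0, ∃ r > 1, ∃ D : ℝ, ∀ n : ℕ, Even n → 1 ≤ n →
      C * r ^ n - D * n ≤ ∫ x, Qpoly n x ∂ν := by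
  obtain ⟨δ, hδ, hr⟩ : ∃ δ > 0, 1 < |x₀| - δ := ⟨(|x₀| - 1) / 2, by linarith, by linarith⟩
  have hball : ∀ x ∈ Metric.ball x₀ δ, |x₀| - δ ≤ |x| ∧ |x| ≤ |x₀| + δ := fun x hx => by
    rw [Metric.mem_ball, Real.dist_eq] at hx
    constructor <;> linarith [abs_sub_abs_le_abs_sub x₀ x, abs_sub_abs_le_abs_sub x x₀,
      abs_sub_comm x x₀]
  have hm : 0 < ν.real (Metric.ball x₀ δ) := ENNReal.toReal_pos
    ((Measure.mem_support_iff_forall x₀).mp hx₀ _ (Metric.ball_mem_nhds x₀ hδ)).ne'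
    (measure_ne_top ν _)
  set R := |x₀| + δ with hR_def
  have hR : 0 < (R + 1) ^ 2 := pow_pos (by linarith [abs_nonneg x₀]) 2
  refine ⟨ν.real (Metric.ball x₀ δ) / (R + 1) ^ 2, by positivity, |x₀| - δ, hr,
    ν.real (Metric.ball x₀ δ) / (R + 1) ^ 2 * R, fun n hn hn₁ => ?_⟩
  have hQ : ∀ x ∈ Metric.ball x₀ δ, ((|x₀| - δ) ^ n - n * R) / (R + 1) ^ 2 ≤ Qpoly n x :=
    fun x hx => (div_le_iff₀' hR).mpr
      (sub_mul_le_sq_mul_Qpoly hn hn₁ (by linarith) (hball x hx).1 (hball x hx).2)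
  calc _ = ((|x₀| - δ) ^ n - n * R) / (R + 1) ^ 2 * ν.real (Metric.ball x₀ δ) := by ring
    _ ≤ ∫ x in Metric.ball x₀ δ, Qpoly n x ∂ν :=
        setIntegral_ge_of_const_le_real measurableSet_ball (measure_ne_top ν _) hQ
          (hint n).integrableOn
    _ ≤ ∫ x, Qpoly n x ∂ν :=
        setIntegral_le_integral (hint n) (.of_forall (Qpoly_nonneg hn))

end Measure

section Growth

variable {γ : ℕ → ℝ}

lemma rootSeq_le_of_abs_le_pow {t : ℝ} (ht : 0 ≤ t) {n : ℕ} (hn : n ≠ 0) (h : |γ n| ≤ t ^ n) :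
    rootSeq γ n ≤ t := by
  rw [rootSeq, one_div, ← Real.pow_rpow_inv_natCast ht hn]
  exact Real.rpow_le_rpow (abs_nonneg _) h (by positivity)

lemma le_rootSeq_of_pow_le_abs {s : ℝ} (hs : 0 ≤ s) {n : ℕ} (hn : n ≠ 0) (h : s ^ n ≤ |γ n|) :
    s ≤ rootSeq γ n := by
  rw [rootSeq, one_div, ← Real.pow_rpow_inv_natCast hs hn]
  exact Real.rpow_le_rpow (by positivity) h (by positivity)

lemma isCoboundedUnder_rootSeq (γ : ℕ → ℝ) : IsCoboundedUnder (· ≤ ·) atTop (rootSeq γ) :=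
  isCoboundedUnder_le_of_le atTop fun _ => Real.rpow_nonneg (abs_nonneg _) _

lemma limsupRoot_le_of_eventually_abs_le_pow {s : ℝ} (hs : 0 ≤ s)
    (h : ∀ t > s, ∀ᶠ n in atTop, |γ n| ≤ t ^ n) : limsupRoot γ ≤ s := by
  refine le_of_forall_gt_imp_ge_of_dense fun t ht => ?_
  refine limsup_le_of_le (isCoboundedUnder_rootSeq γ) ?_
  filter_upwards [h t ht, eventually_ne_atTop 0] with n hn hn₀
  exact rootSeq_le_of_abs_le_pow (hs.trans ht.le) hn₀ hn

lemma le_limsupRoot_of_frequently_pow_le_abs (hg : FiniteExpGrowth γ) {s : ℝ} (hs : 0 ≤ s)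
    (h : ∃ᶠ n in atTop, s ^ n ≤ |γ n|) : s ≤ limsupRoot γ := by
  refine le_limsup_of_frequently_le ?_ hg
  refine (h.and_eventually (eventually_ne_atTop 0)).mono fun n ⟨hn, hn₀⟩ => ?_
  exact le_rootSeq_of_pow_le_abs hs hn₀ hn

lemma limsupRoot_le_one_of_abs_le_mul_pow {α : ℝ} {k : ℕ}
    (h : ∀ n : ℕ, 1 ≤ n → |γ n| ≤ α * (n : ℝ) ^ k) : limsupRoot γ ≤ 1 := by
  refine limsupRoot_le_of_eventually_abs_le_pow zero_le_one fun t ht => ?_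
  have hlo := ((isLittleO_pow_const_const_pow_of_one_lt k ht).const_mul_left α).eventuallyLE
  filter_upwards [hlo, eventually_ge_atTop 1] with n hn hn₁
  calc |γ n| ≤ α * (n : ℝ) ^ k := h n hn₁
    _ ≤ ‖α * (n : ℝ) ^ k‖ := le_abs_self _
    _ ≤ t ^ n := by simpa [abs_of_pos (zero_lt_one.trans ht)] using hn

lemma one_lt_limsupRoot_of_frequently_le (hg : FiniteExpGrowth γ) {C r D E : ℝ} (hC : 0 < C)
    (hr : 1 < r) (h : ∃ᶠ n in atTop, C * r ^ n - D * n - E ≤ γ n) : 1 < limsupRoot γ := by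
  obtain ⟨s, hs, hsr⟩ := exists_between hr
  have hlo : (fun n : ℕ => s ^ n + D * n + E) =o[atTop] fun n => r ^ n :=
    ((isLittleO_pow_pow_of_lt_left (by linarith) hsr).add
      ((isLittleO_coe_const_pow_of_one_lt hr).const_mul_left D)).add
      ((isLittleO_const_left.mpr (.inr (tendsto_norm_atTop_atTop.comp
        (tendsto_pow_atTop_atTop_of_one_lt hr)))))
  have hfreq : ∃ᶠ n in atTop, s ^ n ≤ |γ n| := by
    refine (h.and_eventually (hlo.bound hC)).mono fun n ⟨hn, hbound⟩ => ?_
    rw [Real.norm_of_nonneg (by positivity : (0 : ℝ) ≤ r ^ n)] at hbound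
    linarith [Real.le_norm_self (s ^ n + D * n + E), le_abs_self (γ n)]
  have : s ≤ limsupRoot γ := le_limsupRoot_of_frequently_pow_le_abs hg (by positivity) hfreq
  linarith

end Growth

section RepTriplet

variable {γ : ℕ → ℝ} {b c : ℝ} {ν : Measure ℝ}

lemma IsRepTriplet.abs_le_mul_sq (hrep : IsRepTriplet γ b c ν)
    (hsupp : measSupport ν ⊆ Set.Icc (-1 : ℝ) 1) {n : ℕ} (hn : 1 ≤ n) :
    |γ n| ≤ (|γ 0| + |b| + c + (ν Set.univ).toReal) * (n : ℝ) ^ 2 := by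
  obtain ⟨hc, hfin, -, -, hγ⟩ := hrep
  rw [measSupport_eq_support] at hsupp
  have hn₁ : (1 : ℝ) ≤ n := by exact_mod_cast hn
  have hint := abs_integral_Qpoly_le hsupp n
  have hb : |b * n| = |b| * n := by rw [abs_mul, Nat.abs_cast]
  have hcn : |c * (n : ℝ) ^ 2| = c * n ^ 2 := abs_of_nonneg (by positivity)
  calc |γ n| ≤ |γ 0| + |b| * n + c * n ^ 2 + n ^ 2 * ν.real Set.univ := by
        rw [hγ n]
        linarith [abs_add_le (γ 0 + b * n + c * (n : ℝ) ^ 2) (∫ x, Qpoly n x ∂ν),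
          abs_add_le (γ 0 + b * n) (c * (n : ℝ) ^ 2), abs_add_le (γ 0) (b * n)]
    _ ≤ _ := by
        simp only [Measure.real]
        nlinarith [mul_nonneg (abs_nonneg (γ 0)) (by nlinarith : (0 : ℝ) ≤ n ^ 2 - 1),
          mul_nonneg (abs_nonneg b) (by nlinarith : (0 : ℝ) ≤ n ^ 2 - n)]

lemma IsRepTriplet.support_subset_Icc (hg : FiniteExpGrowth γ) (hrep : IsRepTriplet γ b c ν)
    (hγ : limsupRoot γ ≤ 1) : measSupport ν ⊆ Set.Icc (-1 : ℝ) 1 := by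
  obtain ⟨hc, hfin, ⟨K, hK, hKc⟩, -, hrepn⟩ := hrep
  rw [measSupport_eq_support]
  intro x₀ hx₀
  by_contra hout
  obtain ⟨C, hC, r, hr, D, hlow⟩ := exists_mul_pow_sub_le_integral_Qpoly
    (integrable_Qpoly hK hKc) hx₀ (lt_of_not_ge fun h => hout (abs_le.mp h))
  refine hγ.not_gt (one_lt_limsupRoot_of_frequently_le hg hC hr (D := D + |b|) (E := |γ 0|) ?_)
  refine (Nat.frequently_even.and_eventually (eventually_ge_atTop 1)).mono
    fun n ⟨hn, hn₁⟩ => ?_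
  rw [hrepn n]
  nlinarith [hlow n hn hn₁, neg_abs_le (γ 0), neg_abs_le b, (n.cast_nonneg : (0 : ℝ) ≤ n)]

end RepTriplet

theorem cpd_polynomial_growth_general (γ : ℕ → ℝ) (hg : FiniteExpGrowth γ)
    (b c : ℝ) (ν : Measure ℝ) (hrep : IsRepTriplet γ b c ν) :
    ((∃ α : ℝ, 0 ≤ α ∧ ∀ n : ℕ, 1 ≤ n → |γ n| ≤ α * (n : ℝ) ^ 2) ↔ limsupRoot γ ≤ 1) ∧
    (limsupRoot γ ≤ 1 ↔ measSupport ν ⊆ Set.Icc (-1 : ℝ) 1) ∧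
    (measSupport ν ⊆ Set.Icc (-1 : ℝ) 1 →
      ∀ n : ℕ, 1 ≤ n →
        |γ n| ≤ (|γ 0| + |b| + c + (ν Set.univ).toReal) * (n : ℝ) ^ 2) := by
  have hα : 0 ≤ |γ 0| + |b| + c + (ν Set.univ).toReal := by
    have := hrep.1
    positivity
  have i_ii : (∃ α : ℝ, 0 ≤ α ∧ ∀ n : ℕ, 1 ≤ n → |γ n| ≤ α * (n : ℝ) ^ 2) →
      limsupRoot γ ≤ 1 :=
    fun ⟨_, _, h⟩ => limsupRoot_le_one_of_abs_le_mul_pow h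
  have ii_iii := hrep.support_subset_Icc hg
  have iii_i (hsupp : measSupport ν ⊆ Set.Icc (-1 : ℝ) 1) :
      ∃ α : ℝ, 0 ≤ α ∧ ∀ n : ℕ, 1 ≤ n → |γ n| ≤ α * (n : ℝ) ^ 2 :=
    ⟨_, hα, fun _ => hrep.abs_le_mul_sq hsupp⟩
  exact ⟨⟨i_ii, iii_i ∘ ii_iii⟩, ⟨ii_iii, i_ii ∘ iii_i⟩, fun hsupp _ => hrep.abs_le_mul_sq hsupp⟩

/-- Proposition `grown`: for a CPD sequence `γ` of at most exponential growth with representing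
triplet `(b, c, ν)`, the following are equivalent: (i) `|γ_n| ≤ α n²` for some `α ≥ 0` and all
`n ≥ 1`; (ii) `limsup |γ_n|^{1/n} ≤ 1`; (iii) `supp ν ⊆ [-1, 1]`.  Moreover, (iii) implies (i)
with `α = |γ_0| + |b| + c + ν(ℝ)`. -/
theorem cpd_polynomial_growth (γ : ℕ → ℝ) (hcpd : IsCPDSeq γ) (hg : FiniteExpGrowth γ)
    (b c : ℝ) (ν : Measure ℝ) (hrep : IsRepTriplet γ b c ν) :
    ((∃ α : ℝ, 0 ≤ α ∧ ∀ n : ℕ, 1 ≤ n → |γ n| ≤ α * (n : ℝ) ^ 2) ↔ limsupRoot γ ≤ 1) ∧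
    (limsupRoot γ ≤ 1 ↔ measSupport ν ⊆ Set.Icc (-1 : ℝ) 1) ∧
    (measSupport ν ⊆ Set.Icc (-1 : ℝ) 1 →
      ∀ n : ℕ, 1 ≤ n →
        |γ n| ≤ (|γ 0| + |b| + c + (ν Set.univ).toReal) * (n : ℝ) ^ 2) :=
  cpd_polynomial_growth_general γ hg b c ν hrep

end
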